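/- Let 0 < r₁ < r₂ be real numbers, let 0 < Δ < 1/r₁, and set Δ̂ = Δ·r₁/(r₂ − r₁). Define the probability densities f₁(r) = 1/r₁ for r ∈ [0, r₁] and 0 otherwise, and f₂(r) = 1/r₁ − Δ for r ∈ [0, r₁], f₂(r) = Δ̂ for r ∈ (r₁, r₂], and 0 otherwise. Then for every integer N ≥ 1, ∫₀^{r₁} r^N f₁(r) dr < ∫₀^{r₂} r^N f₂(r) dr. -/

import Mathlib

/-!
Passing from `f₁` to `f₂` moves mass `Δ·r₁` from `[0, r₁]` to `(r₁, r₂]`, spread uniformly on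
both sides. Since `r ↦ r ^ N` is strictly increasing for `N ≥ 1`, its average over `[0, r₁]` is
strictly smaller than its average over `[r₁, r₂]`, so the move strictly increases the moment.
-/

open Set intervalIntegral

theorem MonotoneOn.intervalIntegral_le_sub_mul {g : ℝ → ℝ} {a b : ℝ} (hab : a ≤ b)
    (hg : MonotoneOn g (Icc a b)) :
    ∫ x in a..b, g x ≤ (b - a) * g b := by
  have hgi : IntervalIntegrable g MeasureTheory.volume a b :=
    MonotoneOn.intervalIntegrable (by rwa [uIcc_of_le hab])
  calc ∫ x in a..b, g x ≤ ∫ _ in a..b, g b :=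
        integral_mono_on hab hgi intervalIntegrable_const
          fun x hx => hg hx (right_mem_Icc.2 hab) hx.2
    _ = (b - a) * g b := by rw [integral_const, smul_eq_mul]

theorem StrictMonoOn.sub_mul_lt_intervalIntegral {g : ℝ → ℝ} {a b : ℝ} (hab : a < b)
    (hg : StrictMonoOn g (Icc a b)) (hgc : ContinuousOn g (Icc a b)) :
    (b - a) * g a < ∫ x in a..b, g x := by
  have ha : a ∈ Icc a b := left_mem_Icc.2 hab.le
  have hb : b ∈ Icc a b := right_mem_Icc.2 hab.le
  rw [← smul_eq_mul, ← integral_const]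
  exact integral_lt_integral_of_continuousOn_of_le_of_exists_lt hab continuousOn_const hgc
    (fun x hx => hg.monotoneOn ha (Ioc_subset_Icc_self hx) hx.1.le) ⟨b, hb, hg ha hb hab⟩

theorem StrictMonoOn.mul_intervalIntegral_lt_mul_intervalIntegral {g : ℝ → ℝ} {a b c : ℝ}
    (hab : a < b) (hbc : b < c) (hg : StrictMonoOn g (Icc a c))
    (hgc : ContinuousOn g (Icc b c)) :
    (c - b) * ∫ x in a..b, g x < (b - a) * ∫ x in b..c, g x :=
  calc (c - b) * ∫ x in a..b, g x
      ≤ (c - b) * ((b - a) * g b) :=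
        mul_le_mul_of_nonneg_left (MonotoneOn.intervalIntegral_le_sub_mul hab.le <|
          hg.monotoneOn.mono (Icc_subset_Icc_right hbc.le)) (sub_nonneg.2 hbc.le)
    _ = (b - a) * ((c - b) * g b) := by ring
    _ < (b - a) * ∫ x in b..c, g x :=
        mul_lt_mul_of_pos_left (StrictMonoOn.sub_mul_lt_intervalIntegral hbc
          (hg.mono (Icc_subset_Icc_left hab.le)) hgc) (sub_pos.2 hab)

theorem integral_mul_eq_mul_integral_of_eqOn_Ioo {g f : ℝ → ℝ} {a b c : ℝ} (hab : a ≤ b)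
    (hf : EqOn f (fun _ => c) (Ioo a b)) :
    ∫ x in a..b, g x * f x = c * ∫ x in a..b, g x := by
  rw [integral_congr_Ioo_of_le hab fun x hx => congrArg (g x * ·) (hf hx), integral_mul_const,
    mul_comm]

theorem integral_mul_eq_of_eqOn_Ioo_of_eqOn_Ioo {g f : ℝ → ℝ} {a b c u v : ℝ}
    (hg : Continuous g) (hab : a ≤ b) (hbc : b ≤ c)
    (hu : EqOn f (fun _ => u) (Ioo a b)) (hv : EqOn f (fun _ => v) (Ioo b c)) :
    ∫ x in a..c, g x * f x = u * (∫ x in a..b, g x) + v * ∫ x in b..c, g x := by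
  have hint : ∀ {p q w : ℝ}, p ≤ q → EqOn f (fun _ => w) (Ioo p q) →
      IntervalIntegrable (fun x => g x * f x) MeasureTheory.volume p q := fun hpq hw =>
    ((hg.intervalIntegrable _ _).mul_const _).congr_uIoo <|
      uIoo_of_le hpq ▸ fun x hx => congrArg (g x * ·) (hw hx).symm
  rw [← integral_add_adjacent_intervals (hint hab hu) (hint hbc hv),
    integral_mul_eq_mul_integral_of_eqOn_Ioo hab hu, integral_mul_eq_mul_integral_of_eqOn_Ioo hbc hv]

theorem moment_comparison_lemma2_general
    (r₁ r₂ Δ : ℝ) (hr₁ : 0 < r₁) (hr₁₂ : r₁ < r₂) (hΔ : 0 < Δ)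
    (N : ℕ) (hN : 1 ≤ N) :
    (∫ r in (0:ℝ)..r₁, r ^ N * (if 0 ≤ r ∧ r ≤ r₁ then 1 / r₁ else 0)) <
      ∫ r in (0:ℝ)..r₂, r ^ N *
        (if 0 ≤ r ∧ r ≤ r₁ then 1 / r₁ - Δ
         else if r₁ < r ∧ r ≤ r₂ then Δ * r₁ / (r₂ - r₁) else 0) := by
  set f₁ : ℝ → ℝ := fun r => if 0 ≤ r ∧ r ≤ r₁ then 1 / r₁ else 0
  set f₂ : ℝ → ℝ := fun r => if 0 ≤ r ∧ r ≤ r₁ then 1 / r₁ - Δ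
    else if r₁ < r ∧ r ≤ r₂ then Δ * r₁ / (r₂ - r₁) else 0
  have hf₁ : EqOn f₁ (fun _ => 1 / r₁) (Ioo 0 r₁) := fun r hr => if_pos ⟨hr.1.le, hr.2.le⟩
  have hf₂_low : EqOn f₂ (fun _ => 1 / r₁ - Δ) (Ioo 0 r₁) :=
    fun r hr => if_pos ⟨hr.1.le, hr.2.le⟩
  have hf₂_high : EqOn f₂ (fun _ => Δ * r₁ / (r₂ - r₁)) (Ioo r₁ r₂) :=
    fun r hr => (if_neg fun h => hr.1.not_ge h.2).trans (if_pos ⟨hr.1, hr.2.le⟩)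
  rw [integral_mul_eq_mul_integral_of_eqOn_Ioo hr₁.le hf₁,
    integral_mul_eq_of_eqOn_Ioo_of_eqOn_Ioo (continuous_pow N) hr₁.le hr₁₂.le hf₂_low hf₂_high]
  have haverages := StrictMonoOn.mul_intervalIntegral_lt_mul_intervalIntegral hr₁ hr₁₂
    ((pow_left_strictMonoOn₀ (by omega)).mono fun r hr => hr.1) (continuous_pow N).continuousOn
  have hgain : Δ * ∫ r in (0:ℝ)..r₁, r ^ N < Δ * r₁ / (r₂ - r₁) * ∫ r in r₁..r₂, r ^ N := by
    rw [div_mul_eq_mul_div, lt_div_iff₀ (sub_pos.2 hr₁₂)]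
    linarith [mul_lt_mul_of_pos_left haverages hΔ]
  linarith

/-- **Lemma 2.** For `0 < r₁ < r₂`, `0 < Δ < 1/r₁`, `Δ̂ = Δ·r₁/(r₂ − r₁)`,
with densities `f₁ = 1/r₁` on `[0, r₁]` (else `0`) and `f₂ = 1/r₁ − Δ` on `[0, r₁]`,
`f₂ = Δ̂` on `(r₁, r₂]` (else `0`), for every integer `N ≥ 1` the `N`-th moment of `f₁`
is strictly smaller than that of `f₂`:
`∫₀^{r₁} r^N f₁(r) dr < ∫₀^{r₂} r^N f₂(r) dr`. -/
theorem moment_comparison_lemma2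
    (r₁ r₂ Δ : ℝ) (hr₁ : 0 < r₁) (hr₁₂ : r₁ < r₂) (hΔ : 0 < Δ) (hΔ' : Δ < 1 / r₁)
    (N : ℕ) (hN : 1 ≤ N) :
    (∫ r in (0:ℝ)..r₁, r ^ N * (if 0 ≤ r ∧ r ≤ r₁ then 1 / r₁ else 0)) <
      ∫ r in (0:ℝ)..r₂, r ^ N *
        (if 0 ≤ r ∧ r ≤ r₁ then 1 / r₁ - Δ
         else if r₁ < r ∧ r ≤ r₂ then Δ * r₁ / (r₂ - r₁) else 0) :=
  moment_comparison_lemma2_general r₁ r₂ Δ hr₁ hr₁₂ hΔ N hN
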